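/- arXiv:1412.1963 — 2 statements merged into one kernel-verified Lean document; each statement's English description precedes it below -/
import Mathlib

section
/- Let a > 1 be a real number and let N = ⌊a⌋ + 1. Then ∑_{k=0}^{N} 1/(a + k)² > 1/(4a). -/
/-! Bound `1 / (a + k) ^ 2` below by the telescoping term `1 / (a + k) - 1 / (a + k + 1)`:
the sum over `k < n` exceeds `1 / a - 1 / (a + n) = n / (a (a + n))`, which is at least
`1 / (2a)` as soon as `n ≥ a`, and `⌊a⌋ + 2 > a`. -/

open Finset

lemma one_div_sub_one_div_add_one_lt_one_div_sq {x : ℝ} (hx : 0 < x) :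
    1 / x - 1 / (x + 1) < 1 / x ^ 2 := by
  rw [div_sub_div _ _ hx.ne' (by positivity), div_lt_div_iff₀ (by positivity) (by positivity)]
  nlinarith

lemma one_div_sub_one_div_add_lt_sum_one_div_sq {a : ℝ} (ha : 0 < a) {n : ℕ} (hn : n ≠ 0) :
    1 / a - 1 / (a + n) < ∑ k ∈ range n, 1 / (a + k) ^ 2 := by
  have htelescope : ∑ k ∈ range n, (1 / (a + k) - 1 / (a + (k + 1 : ℕ))) = 1 / a - 1 / (a + n) := by
    simpa using sum_range_sub' (fun k : ℕ => 1 / (a + k)) n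
  rw [← htelescope]
  refine sum_lt_sum_of_nonempty (nonempty_range_iff.mpr hn) fun k _ => ?_
  rw [Nat.cast_succ, ← add_assoc]
  exact one_div_sub_one_div_add_one_lt_one_div_sq (by positivity)

lemma one_div_two_mul_le_one_div_sub_one_div_add {a b : ℝ} (ha : 0 < a) (hab : a ≤ b) :
    1 / (2 * a) ≤ 1 / a - 1 / (a + b) := by
  rw [div_sub_div _ _ ha.ne' (by linarith), div_le_div_iff₀ (by positivity) (by nlinarith)]
  nlinarith

theorem partial_sum_inv_sq_gt (a : ℝ) (ha : 1 < a) :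
    ∑ k ∈ Finset.range (⌊a⌋₊ + 1 + 1), 1 / (a + k) ^ 2 > 1 / (4 * a) := by
  have ha0 : 0 < a := by linarith
  have hlt : a < ((⌊a⌋₊ + 1 + 1 : ℕ) : ℝ) := by
    push_cast
    linarith [Nat.lt_floor_add_one a]
  calc 1 / (4 * a) ≤ 1 / (2 * a) := by gcongr; norm_num
    _ ≤ 1 / a - 1 / (a + ((⌊a⌋₊ + 1 + 1 : ℕ) : ℝ)) :=
      one_div_two_mul_le_one_div_sub_one_div_add ha0 hlt.le
    _ < _ := one_div_sub_one_div_add_lt_sum_one_div_sq ha0 (by omega)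
end

section
/- Let (λ_n) be a strictly increasing sequence of positive reals with λ_n → ∞, and suppose there is M > 1 and a sequence of consecutive blocks D_m partitioning the terms of (λ_n) such that min D_{m+1} = M · max D_m for every m. Then every subsequence (μ_n) of (λ_n) satisfies limsup_{n→∞} μ_{n+1}/μ_n ≥ M. -/
open Filter

theorem subsequence_limsup_ratio_ge (M : ℝ) (hM : 1 < M) (lam : ℕ → ℝ)
    (hpos : ∀ n, 0 < lam n) (hmono : StrictMono lam)
    (htend : Tendsto lam atTop atTop)
    (b : ℕ → ℕ) (hb0 : b 0 = 0) (hbmono : StrictMono b)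
    (hblock : ∀ m, lam (b (m + 1)) = M * lam (b (m + 1) - 1)) :
    ∀ φ : ℕ → ℕ, StrictMono φ →
      Filter.limsup (fun n => ((lam (φ (n + 1)) / lam (φ n) : ℝ) : EReal)) atTop ≥
        (M : EReal) := by
  intro φ hφ
  have key : ∀ m : ℕ, ∃ n, m ≤ n ∧ M ≤ lam (φ (n + 1)) / lam (φ n) := by
    intro m
    set j := φ m with hj
    have hbj : j + 1 ≤ b (j + 1) := hbmono.le_apply
    set B := b (j + 1) - 1 with hB
    have hjB : j ≤ B := by omega
    have hmB : m ≤ B := le_trans hφ.le_apply hjB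
    classical
    set P : ℕ → Prop := fun n => φ n ≤ B with hP
    have hPm : P m := hjB
    set n := Nat.findGreatest P B with hn
    have hPn : P n := Nat.findGreatest_spec hmB hPm
    have hmn : m ≤ n := Nat.le_findGreatest hmB hPm
    have hnot : ¬ P (n + 1) := by
      by_cases h : n + 1 ≤ B
      · exact Nat.findGreatest_is_greatest (Nat.lt_succ_self n) h
      · intro hc
        exact h (le_trans hφ.le_apply hc)
    have h1 : b (j + 1) ≤ φ (n + 1) := by
      simp only [P, not_le] at hnot
      omega
    have h2 : lam (φ n) ≤ lam B := hmono.monotone hPn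
    have h3 : lam (b (j + 1)) ≤ lam (φ (n + 1)) := hmono.monotone h1
    refine ⟨n, hmn, ?_⟩
    rw [le_div_iff₀ (hpos _)]
    calc M * lam (φ n) ≤ M * lam B := by nlinarith [hpos (φ n)]
      _ = lam (b (j + 1)) := (hblock j).symm
      _ ≤ lam (φ (n + 1)) := h3
  have hfreq : ∃ᶠ n in atTop,
      (M : EReal) ≤ ((lam (φ (n + 1)) / lam (φ n) : ℝ) : EReal) := by
    rw [frequently_atTop]
    intro m
    obtain ⟨n, hmn, hle⟩ := key m
    exact ⟨n, hmn, by exact_mod_cast hle⟩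
  exact le_limsup_of_frequently_le hfreq
end
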